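/- arXiv:2403.00650 — 4 statements merged into one kernel-verified Lean document; each statement's English description precedes it below -/
import Mathlib

section
/- Main Lemma: Let p ≥ 1 be a real number, let λ ∈ ((p-1)/p, 1), and let γ > 0, t > 0. Set α := pλ - p + 1 (so α ∈ (0,1]). Then (γ / Γ(α)) · ∫_0^t (t-s)^{α-1} · E_α(γ s^α) ds ≤ E_α(γ t^α), i.e. (γ / Γ(pλ-p+1)) ∫_0^t (t-s)^{pλ-p} E_{pλ-p+1}(γ s^{pλ-p+1}) ds ≤ E_{pλ-p+1}(γ t^{pλ-p+1}). -/
open MeasureTheory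

/-- The Mittag-Leffler function `E_α(x) = ∑_{n=0}^∞ x^n / Γ(nα + 1)`. -/
noncomputable def mittagLeffler (α x : ℝ) : ℝ :=
  ∑' n : ℕ, x ^ n / Real.Gamma ((n : ℝ) * α + 1)

/-!
Expanding `E_α` termwise, the weight `(t - s)^(α-1)` turns the `n`-th term into a Beta integral:
`∫₀ᵗ (t - s)^(α-1) s^(nα) ds = Γ(α) Γ(nα+1) / Γ((n+1)α+1) · t^((n+1)α)`. Hence
`γ / Γ(α) · ∫₀ᵗ (t - s)^(α-1) E_α(γ s^α) ds` is the series of `E_α(γ t^α)` without its constant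
term `1`, i.e. it equals `E_α(γ t^α) - 1`. Integrating termwise is legitimate because the
integrals of the absolute values of the terms form the same series for `|γ|`, which converges by
the ratio test and the log-convexity of `Γ`.
-/

open Filter Set

namespace Real

/-- Log-convexity of `Γ`: its log-slope over `[x + 1, x + 1 + a]` dominates the log-slope `log x`
over `[x, x + 1]`. -/
theorem Gamma_add_one_mul_rpow_le_Gamma {x a : ℝ} (hx : 0 < x) (ha : 0 < a) :
    Gamma (x + 1) * x ^ a ≤ Gamma (x + 1 + a) := by
  have hslope := convexOn_log_Gamma.slope_mono_adjacent (x := x) (y := x + 1) (z := x + 1 + a)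
    (mem_Ioi.2 hx) (mem_Ioi.2 (by linarith)) (by linarith) (by linarith)
  have hGx : 0 < Gamma x := Gamma_pos_of_pos hx
  have hGx1 : 0 < Gamma (x + 1) := Gamma_pos_of_pos (by linarith)
  have hslope_left : log (Gamma (x + 1)) - log (Gamma x) = log x := by
    rw [Gamma_add_one hx.ne', log_mul hx.ne' hGx.ne']
    ring
  simp only [Function.comp_apply, add_sub_cancel_left, div_one, hslope_left] at hslope
  have hlog : log (Gamma (x + 1) * x ^ a) ≤ log (Gamma (x + 1 + a)) := by
    rw [log_mul hGx1.ne' (rpow_pos_of_pos hx a).ne', log_rpow hx]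
    linarith [(le_div_iff₀ ha).1 hslope]
  exact (log_le_log_iff (by positivity) (Gamma_pos_of_pos (by linarith))).1 hlog

end Real

theorem summable_mittagLeffler {α : ℝ} (hα : 0 < α) (x : ℝ) :
    Summable fun n : ℕ => x ^ n / Real.Gamma ((n : ℝ) * α + 1) := by
  refine summable_of_ratio_norm_eventually_le (r := 1 / 2) (by norm_num) ?_
  have hgrowth : Tendsto (fun n : ℕ => ((n : ℝ) * α) ^ α) atTop atTop :=
    (tendsto_rpow_atTop hα).comp (tendsto_natCast_atTop_atTop.atTop_mul_const hα)
  filter_upwards [hgrowth.eventually_ge_atTop (2 * |x|), eventually_ge_atTop 1] with n hn hn1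
  have hnα : 0 < (n : ℝ) * α := mul_pos (by exact_mod_cast hn1) hα
  have hG : 0 < Real.Gamma ((n : ℝ) * α + 1) := Real.Gamma_pos_of_pos (by positivity)
  have hstep := Real.Gamma_add_one_mul_rpow_le_Gamma hnα hα
  rw [show (n : ℝ) * α + 1 + α = ((n + 1 : ℕ) : ℝ) * α + 1 by push_cast; ring] at hstep
  have hG' : 0 < Real.Gamma (((n + 1 : ℕ) : ℝ) * α + 1) := Real.Gamma_pos_of_pos (by positivity)
  simp only [norm_div, norm_pow, Real.norm_eq_abs, abs_of_pos hG, abs_of_pos hG']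
  have hpow : 0 < ((n : ℝ) * α) ^ α := Real.rpow_pos_of_pos hnα α
  calc |x| ^ (n + 1) / Real.Gamma (((n + 1 : ℕ) : ℝ) * α + 1)
      ≤ |x| ^ (n + 1) / (Real.Gamma ((n : ℝ) * α + 1) * ((n : ℝ) * α) ^ α) :=
        div_le_div_of_nonneg_left (by positivity) (by positivity) hstep
    _ = |x| / ((n : ℝ) * α) ^ α * (|x| ^ n / Real.Gamma ((n : ℝ) * α + 1)) := by
        field_simp; ring
    _ ≤ 1 / 2 * (|x| ^ n / Real.Gamma ((n : ℝ) * α + 1)) := by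
        refine mul_le_mul_of_nonneg_right ?_ (by positivity)
        rw [div_le_iff₀ hpow]
        linarith

theorem summable_pow_div_Gamma_succ_mul_add_one {α : ℝ} (hα : 0 < α) (x : ℝ) :
    Summable fun n : ℕ => x ^ n / Real.Gamma (((n + 1 : ℕ) : ℝ) * α + 1) := by
  rcases eq_or_ne x 0 with rfl | hx
  · refine summable_of_ne_finset_zero (s := {0}) fun n hn => ?_
    simp [zero_pow (Finset.notMem_singleton.1 hn)]
  · refine (((summable_nat_add_iff 1).2 (summable_mittagLeffler hα x)).mul_left x⁻¹).congr
      fun n => ?_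
    rw [pow_succ]
    field_simp

theorem hasSum_mittagLeffler_succ {α : ℝ} (hα : 0 < α) (x : ℝ) :
    HasSum (fun n : ℕ => x ^ (n + 1) / Real.Gamma (((n + 1 : ℕ) : ℝ) * α + 1))
      (mittagLeffler α x - 1) := by
  have h := (hasSum_nat_add_iff' 1).2 (summable_mittagLeffler hα x).hasSum
  simpa [mittagLeffler, Real.Gamma_one] using h

theorem integral_rpow_mul_sub_rpow {a b T : ℝ} (ha : 0 < a) (hb : 0 < b) (hT : 0 < T) :
    ∫ s in (0 : ℝ)..T, s ^ (a - 1) * (T - s) ^ (b - 1)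
      = Real.Gamma a * Real.Gamma b / Real.Gamma (a + b) * T ^ (a + b - 1) := by
  have hcomplex : (∫ s in (0 : ℝ)..T, (s : ℂ) ^ ((a : ℂ) - 1) * ((T : ℂ) - s) ^ ((b : ℂ) - 1))
      = ((∫ s in (0 : ℝ)..T, s ^ (a - 1) * (T - s) ^ (b - 1) : ℝ) : ℂ) := by
    rw [← intervalIntegral.integral_ofReal]
    refine intervalIntegral.integral_congr fun s hs => ?_
    rw [uIcc_of_le hT.le] at hs
    rw [Complex.ofReal_mul, Complex.ofReal_cpow hs.1, Complex.ofReal_cpow (sub_nonneg.2 hs.2)]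
    push_cast
    ring
  have hbeta : Complex.betaIntegral a b
      = ((Real.Gamma a * Real.Gamma b / Real.Gamma (a + b) : ℝ) : ℂ) := by
    have h := Complex.Gamma_mul_Gamma_eq_betaIntegral (s := a) (t := b)
      (by simpa using ha) (by simpa using hb)
    rw [← Complex.ofReal_add, Complex.Gamma_ofReal, Complex.Gamma_ofReal,
      Complex.Gamma_ofReal] at h
    have hne : ((Real.Gamma (a + b) : ℝ) : ℂ) ≠ 0 :=
      Complex.ofReal_ne_zero.2 (Real.Gamma_pos_of_pos (by linarith)).ne'
    push_cast
    rw [eq_div_iff hne]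
    linear_combination -h
  apply Complex.ofReal_injective
  rw [← hcomplex, Complex.betaIntegral_scaled _ _ hT, hbeta,
    show (a : ℂ) + b - 1 = ((a + b - 1 : ℝ) : ℂ) by push_cast; ring, ← Complex.ofReal_cpow hT.le]
  push_cast
  ring

theorem integral_sub_rpow_mul_mittagLeffler_term {α t : ℝ} (hα : 0 < α) (ht : 0 < t) (γ : ℝ)
    (n : ℕ) :
    ∫ s in (0 : ℝ)..t, (t - s) ^ (α - 1) * ((γ * s ^ α) ^ n / Real.Gamma ((n : ℝ) * α + 1))
      = Real.Gamma α * t ^ α * ((γ * t ^ α) ^ n / Real.Gamma (((n + 1 : ℕ) : ℝ) * α + 1)) := by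
  have hnα : 0 < (n : ℝ) * α + 1 := by positivity
  have hintegrand : ∀ s ∈ uIcc 0 t,
      (t - s) ^ (α - 1) * ((γ * s ^ α) ^ n / Real.Gamma ((n : ℝ) * α + 1))
        = γ ^ n / Real.Gamma ((n : ℝ) * α + 1) * (s ^ ((n : ℝ) * α + 1 - 1) * (t - s) ^ (α - 1)) := by
    intro s hs
    rw [uIcc_of_le ht.le] at hs
    rw [add_sub_cancel_right, mul_pow, ← Real.rpow_mul_natCast hs.1, mul_comm α]
    ring
  rw [intervalIntegral.integral_congr hintegrand, intervalIntegral.integral_const_mul,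
    integral_rpow_mul_sub_rpow hnα hα ht, mul_pow, ← Real.rpow_mul_natCast ht.le,
    show (n : ℝ) * α + 1 + α - 1 = α + α * n by ring, Real.rpow_add ht,
    show (n : ℝ) * α + 1 + α = ((n + 1 : ℕ) : ℝ) * α + 1 by push_cast; ring]
  field_simp

theorem intervalIntegrable_sub_rpow_mul_mittagLeffler_term {α t : ℝ} (hα : 0 < α) (γ : ℝ)
    (n : ℕ) :
    IntervalIntegrable
      (fun s => (t - s) ^ (α - 1) * ((γ * s ^ α) ^ n / Real.Gamma ((n : ℝ) * α + 1)))
      volume 0 t := by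
  have hkernel : IntervalIntegrable (fun s : ℝ => (t - s) ^ (α - 1)) volume 0 t := by
    simpa using ((intervalIntegral.intervalIntegrable_rpow' (r := α - 1) (by linarith)
      (a := 0) (b := t)).comp_sub_left t).symm
  exact hkernel.mul_continuousOn
    (((continuous_const.mul (Real.continuous_rpow_const hα.le)).pow n).div_const _).continuousOn

theorem mul_integral_sub_rpow_mul_mittagLeffler {α t : ℝ} (hα : 0 < α) (ht : 0 < t) (γ : ℝ) :
    γ * ∫ s in (0 : ℝ)..t, (t - s) ^ (α - 1) * mittagLeffler α (γ * s ^ α)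
      = Real.Gamma α * (mittagLeffler α (γ * t ^ α) - 1) := by
  have hnorm : ∀ n : ℕ, ∫ s in Ioc 0 t,
      ‖(t - s) ^ (α - 1) * ((γ * s ^ α) ^ n / Real.Gamma ((n : ℝ) * α + 1))‖
      = Real.Gamma α * t ^ α * ((|γ| * t ^ α) ^ n / Real.Gamma (((n + 1 : ℕ) : ℝ) * α + 1)) := by
    intro n
    rw [← integral_sub_rpow_mul_mittagLeffler_term hα ht |γ| n,
      intervalIntegral.integral_of_le ht.le]
    refine setIntegral_congr_fun measurableSet_Ioc fun s hs => ?_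
    rw [norm_mul, norm_div, norm_pow, norm_mul, Real.norm_eq_abs γ,
      Real.norm_of_nonneg (Real.rpow_nonneg (sub_nonneg.2 hs.2) _),
      Real.norm_of_nonneg (Real.rpow_nonneg hs.1.le _),
      Real.norm_of_nonneg (Real.Gamma_pos_of_pos (by positivity)).le]
  have hsum := hasSum_integral_of_summable_integral_norm
    (F := fun (n : ℕ) s => (t - s) ^ (α - 1) * ((γ * s ^ α) ^ n / Real.Gamma ((n : ℝ) * α + 1)))
    (fun n => (intervalIntegrable_sub_rpow_mul_mittagLeffler_term hα γ n).1)
    (by simpa only [hnorm] using (summable_pow_div_Gamma_succ_mul_add_one hα _).mul_left _)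
  have hterm : ∀ n : ℕ, γ * ∫ s in Ioc 0 t,
      (t - s) ^ (α - 1) * ((γ * s ^ α) ^ n / Real.Gamma ((n : ℝ) * α + 1))
      = Real.Gamma α * ((γ * t ^ α) ^ (n + 1) / Real.Gamma (((n + 1 : ℕ) : ℝ) * α + 1)) := by
    intro n
    rw [← intervalIntegral.integral_of_le ht.le, integral_sub_rpow_mul_mittagLeffler_term hα ht]
    ring
  have hpointwise : ∀ s : ℝ,
      ∑' n : ℕ, (t - s) ^ (α - 1) * ((γ * s ^ α) ^ n / Real.Gamma ((n : ℝ) * α + 1))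
      = (t - s) ^ (α - 1) * mittagLeffler α (γ * s ^ α) := fun s => by
    rw [mittagLeffler, tsum_mul_left]
  have h := hsum.mul_left γ
  simp only [hterm, hpointwise] at h
  rw [intervalIntegral.integral_of_le ht.le]
  exact h.unique ((hasSum_mittagLeffler_succ hα _).mul_left _)

theorem main_lemma_general (p lam γ t : ℝ) (hp : 1 ≤ p)
    (hlam : lam ∈ Set.Ioo ((p - 1) / p) 1) (ht : 0 < t) :
    γ / Real.Gamma (p * lam - p + 1) *
        ∫ s in (0 : ℝ)..t,
          (t - s) ^ (p * lam - p) *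
            mittagLeffler (p * lam - p + 1) (γ * s ^ (p * lam - p + 1))
      ≤ mittagLeffler (p * lam - p + 1) (γ * t ^ (p * lam - p + 1)) := by
  have hα : 0 < p * lam - p + 1 := by
    have := (div_lt_iff₀ (by linarith : 0 < p)).1 hlam.1
    linarith
  have hidentity := mul_integral_sub_rpow_mul_mittagLeffler hα ht γ
  rw [add_sub_cancel_right] at hidentity
  rw [div_mul_eq_mul_div, hidentity, mul_div_cancel_left₀ _ (Real.Gamma_pos_of_pos hα).ne']
  linarith

/-- Main Lemma: for `p ≥ 1`, `λ ∈ ((p-1)/p, 1)`, `γ > 0`, `t > 0`,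
`(γ / Γ(pλ-p+1)) ∫_0^t (t-s)^{pλ-p} E_{pλ-p+1}(γ s^{pλ-p+1}) ds ≤ E_{pλ-p+1}(γ t^{pλ-p+1})`. -/
theorem main_lemma (p lam γ t : ℝ) (hp : 1 ≤ p)
    (hlam : lam ∈ Set.Ioo ((p - 1) / p) 1) (hγ : 0 < γ) (ht : 0 < t) :
    γ / Real.Gamma (p * lam - p + 1) *
        ∫ s in (0 : ℝ)..t,
          (t - s) ^ (p * lam - p) *
            mittagLeffler (p * lam - p + 1) (γ * s ^ (p * lam - p + 1))
      ≤ mittagLeffler (p * lam - p + 1) (γ * t ^ (p * lam - p + 1)) :=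
  main_lemma_general p lam γ t hp hlam ht
end

section
/- Corollary (case p = 2 of the Main Lemma): Let λ ∈ (1/2, 1), γ > 0 and t > 0. Then (γ / Γ(2λ-1)) · ∫_0^t (t-s)^{2λ-2} · E_{2λ-1}(γ s^{2λ-1}) ds ≤ E_{2λ-1}(γ t^{2λ-1}). -/
/-!
Expand `E_α(γ s^α)` into its power series and integrate term by term: each term is a Beta
integral, `∫_0^t (t-s)^(α-1) s^(nα) ds = Γ(α) Γ(nα+1) / Γ((n+1)α+1) · t^((n+1)α)`,
so `γ / Γ(α)` times the integral is exactly `E_α(γ t^α) - 1`, the series without its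
constant term.
Termwise integration is justified by the ratio test, using the bound
`Γ(y + α) ≥ (y - 1)^α Γ(y)` that comes from the log-convexity of `Γ`.
-/

open MeasureTheory

open Filter Real

lemma Real.rpow_mul_Gamma_le_Gamma_add {y α : ℝ} (hy : 1 < y) (hα : 0 < α) :
    (y - 1) ^ α * Gamma y ≤ Gamma (y + α) := by
  have hslope := convexOn_log_Gamma.slope_mono_adjacent (x := y - 1) (y := y) (z := y + α)
    (Set.mem_Ioi.2 (by linarith)) (Set.mem_Ioi.2 (by linarith)) (by linarith) (by linarith)
  have hΓ : 0 < Gamma (y - 1) := Gamma_pos_of_pos (by linarith)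
  have hrec : log (Gamma y) - log (Gamma (y - 1)) = log (y - 1) := by
    rw [← sub_add_cancel y 1, Gamma_add_one (by linarith), add_sub_cancel_right,
      log_mul (by linarith) hΓ.ne']
    ring
  simp only [Function.comp_apply, sub_sub_cancel, add_sub_cancel_left, div_one, hrec] at hslope
  rw [le_div_iff₀ hα] at hslope
  rw [← exp_log (Gamma_pos_of_pos (by linarith : 0 < y + α)), rpow_def_of_pos (by linarith),
    ← exp_log (Gamma_pos_of_pos (by linarith : 0 < y)), ← exp_add, exp_le_exp]
  linarith

lemma summable_pow_div_Gamma {α : ℝ} (hα : 0 < α) (β x : ℝ) :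
    Summable fun n : ℕ => x ^ n / Gamma (n * α + β) := by
  have hlin : Tendsto (fun n : ℕ => (n : ℝ) * α + β - 1) atTop atTop :=
    tendsto_atTop_add_const_right _ _ <| tendsto_atTop_add_const_right _ _ <|
      tendsto_natCast_atTop_atTop.atTop_mul_const hα
  refine summable_of_ratio_norm_eventually_le (r := 1 / 2) (by norm_num) ?_
  filter_upwards [hlin.eventually_gt_atTop 0,
    ((tendsto_rpow_atTop hα).comp hlin).eventually_ge_atTop (2 * |x|)] with n hy hx
  set y := (n : ℝ) * α + β
  simp only [Function.comp_apply] at hx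
  have hΓ : 0 < Gamma y := Gamma_pos_of_pos (by linarith)
  have hpow : 0 < (y - 1) ^ α := rpow_pos_of_pos hy α
  have hΓα : (y - 1) ^ α * Gamma y ≤ Gamma (y + α) :=
    rpow_mul_Gamma_le_Gamma_add (by linarith) hα
  have hsucc : ((n + 1 : ℕ) : ℝ) * α + β = y + α := by push_cast; ring
  have hΓ' : 0 < Gamma (y + α) := (mul_pos hpow hΓ).trans_le hΓα
  rw [hsucc, norm_div, norm_div, norm_pow, norm_pow, norm_of_nonneg hΓ.le,
    norm_of_nonneg hΓ'.le, pow_succ, Real.norm_eq_abs]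
  calc |x| ^ n * |x| / Gamma (y + α)
      ≤ |x| ^ n * |x| / ((y - 1) ^ α * Gamma y) := by gcongr
    _ ≤ |x| ^ n * ((y - 1) ^ α / 2) / ((y - 1) ^ α * Gamma y) := by gcongr; linarith
    _ = 1 / 2 * (|x| ^ n / Gamma y) := by field_simp

lemma integral_rpow_mul_sub_rpow_s3 {p q t : ℝ} (hp : 0 < p) (hq : 0 < q) (ht : 0 < t) :
    ∫ s in (0 : ℝ)..t, s ^ (p - 1) * (t - s) ^ (q - 1) =
      Gamma p * Gamma q / Gamma (p + q) * t ^ (p + q - 1) := by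
  apply Complex.ofReal_injective
  have hcast : ∀ s ∈ Set.uIcc 0 t, ((s ^ (p - 1) * (t - s) ^ (q - 1) : ℝ) : ℂ) =
      (s : ℂ) ^ ((p : ℂ) - 1) * ((t : ℂ) - s) ^ ((q : ℂ) - 1) := by
    intro s hs
    rw [Set.uIcc_of_le ht.le] at hs
    push_cast [Complex.ofReal_cpow hs.1, Complex.ofReal_cpow (sub_nonneg.2 hs.2)]
    rfl
  rw [← intervalIntegral.integral_ofReal, intervalIntegral.integral_congr hcast,
    Complex.betaIntegral_scaled _ _ ht,
    Complex.betaIntegral_eq_Gamma_mul_div _ _ (by simpa) (by simpa)]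
  push_cast [Complex.ofReal_cpow ht.le, ← Complex.Gamma_ofReal]
  ring

lemma intervalIntegrable_sub_rpow_mul {α t : ℝ} (hα : 0 < α) {g : ℝ → ℝ}
    (hg : ContinuousOn g (Set.uIcc 0 t)) :
    IntervalIntegrable (fun s => (t - s) ^ (α - 1) * g s) volume 0 t := by
  have hsing : IntervalIntegrable (fun s : ℝ => (t - s) ^ (α - 1)) volume 0 t := by
    simpa using ((intervalIntegral.intervalIntegrable_rpow' (r := α - 1) (by linarith)
      (a := 0) (b := t)).comp_sub_left t).symm
  exact hsing.mul_continuousOn hg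

lemma mul_rpow_pow {c s : ℝ} (hs : 0 ≤ s) (α : ℝ) (n : ℕ) :
    (c * s ^ α) ^ n = c ^ n * s ^ (n * α) := by
  rw [mul_pow, mul_comm (n : ℝ), rpow_mul_natCast hs]

lemma integral_sub_rpow_mul_pow_div_Gamma {α t : ℝ} (hα : 0 < α) (ht : 0 < t) (c : ℝ)
    (n : ℕ) :
    ∫ s in (0 : ℝ)..t, (t - s) ^ (α - 1) * ((c * s ^ α) ^ n / Gamma (n * α + 1)) =
      Gamma α * t ^ α * (c * t ^ α) ^ n / Gamma (n * α + (α + 1)) := by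
  have hΓ : 0 < Gamma (n * α + 1) := Gamma_pos_of_pos (by positivity)
  have hexpand : ∀ s ∈ Set.uIcc 0 t,
      (t - s) ^ (α - 1) * ((c * s ^ α) ^ n / Gamma (n * α + 1)) =
        c ^ n / Gamma (n * α + 1) * (s ^ ((n * α + 1) - 1) * (t - s) ^ (α - 1)) := by
    intro s hs
    rw [Set.uIcc_of_le ht.le] at hs
    rw [mul_rpow_pow hs.1, add_sub_cancel_right]
    ring
  rw [intervalIntegral.integral_congr hexpand, intervalIntegral.integral_const_mul,
    integral_rpow_mul_sub_rpow_s3 (by positivity) hα ht, mul_rpow_pow ht.le,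
    show n * α + 1 + α - 1 = α + n * α by ring, rpow_add ht]
  field_simp
  ring_nf

theorem integral_sub_rpow_mul_mittagLeffler {α t : ℝ} (hα : 0 < α) (ht : 0 < t) (γ : ℝ) :
    γ / Gamma α * ∫ s in (0 : ℝ)..t, (t - s) ^ (α - 1) * mittagLeffler α (γ * s ^ α) =
      mittagLeffler α (γ * t ^ α) - 1 := by
  set f : ℕ → ℝ → ℝ := fun n s =>
    (t - s) ^ (α - 1) * ((γ * s ^ α) ^ n / Gamma (n * α + 1))
  have hf_int : ∀ n, IntegrableOn (f n) (Set.Ioc 0 t) := fun n =>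
    (intervalIntegrable_iff_integrableOn_Ioc_of_le ht.le).1 <|
      intervalIntegrable_sub_rpow_mul hα <| ContinuousOn.div_const
        ((continuousOn_const.mul (continuousOn_id.rpow_const fun _ _ => Or.inr hα.le)).pow n) _
  have hf_norm : ∀ n, ∫ s in Set.Ioc 0 t, ‖f n s‖ =
      Gamma α * t ^ α * ((|γ| * t ^ α) ^ n / Gamma (n * α + (α + 1))) := by
    intro n
    rw [← mul_div_assoc, ← integral_sub_rpow_mul_pow_div_Gamma hα ht,
      intervalIntegral.integral_of_le ht.le]
    refine setIntegral_congr_fun measurableSet_Ioc fun s hs => ?_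
    have hΓ : 0 < Gamma (n * α + 1) := Gamma_pos_of_pos (by positivity)
    simp only [f, norm_mul, norm_div, norm_pow, norm_of_nonneg hΓ.le, Real.norm_eq_abs,
      abs_of_nonneg (rpow_nonneg (sub_nonneg.2 hs.2) _), abs_of_nonneg (rpow_nonneg hs.1.le _)]
  have hterm : ∀ n, γ / Gamma α * ∫ s in Set.Ioc 0 t, f n s =
      (γ * t ^ α) ^ (n + 1) / Gamma ((n + 1 : ℕ) * α + 1) := by
    intro n
    have hΓ : Gamma α ≠ 0 := (Gamma_pos_of_pos hα).ne'
    rw [← intervalIntegral.integral_of_le ht.le, integral_sub_rpow_mul_pow_div_Gamma hα ht]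
    push_cast
    field_simp
    ring_nf
  have hsum := (summable_pow_div_Gamma hα 1 (γ * t ^ α)).tsum_eq_zero_add
  simp only [pow_zero, Nat.cast_zero, zero_mul, zero_add, Gamma_one, div_one] at hsum
  calc γ / Gamma α * ∫ s in (0 : ℝ)..t, (t - s) ^ (α - 1) * mittagLeffler α (γ * s ^ α)
      = γ / Gamma α * ∫ s in Set.Ioc 0 t, ∑' n, f n s := by
        simp only [intervalIntegral.integral_of_le ht.le, mittagLeffler, f, tsum_mul_left]
    _ = ∑' n, γ / Gamma α * ∫ s in Set.Ioc 0 t, f n s := by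
        rw [← integral_tsum_of_summable_integral_norm hf_int, tsum_mul_left]
        simpa only [hf_norm] using (summable_pow_div_Gamma hα (α + 1) _).mul_left _
    _ = mittagLeffler α (γ * t ^ α) - 1 := by
        simp only [hterm, mittagLeffler, hsum]
        ring

theorem main_lemma_p_two_general (lam γ t : ℝ) (hlam : lam ∈ Set.Ioo (1 / 2 : ℝ) 1)
    (ht : 0 < t) :
    γ / Real.Gamma (2 * lam - 1) *
        ∫ s in (0 : ℝ)..t,
          (t - s) ^ (2 * lam - 2) * mittagLeffler (2 * lam - 1) (γ * s ^ (2 * lam - 1))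
      ≤ mittagLeffler (2 * lam - 1) (γ * t ^ (2 * lam - 1)) := by
  have hα : 0 < 2 * lam - 1 := by linarith [hlam.1]
  rw [show 2 * lam - 2 = 2 * lam - 1 - 1 by ring, integral_sub_rpow_mul_mittagLeffler hα ht]
  linarith

/-- Corollary (case `p = 2` of the Main Lemma): for `λ ∈ (1/2, 1)`, `γ > 0`, `t > 0`,
`(γ / Γ(2λ-1)) ∫_0^t (t-s)^{2λ-2} E_{2λ-1}(γ s^{2λ-1}) ds ≤ E_{2λ-1}(γ t^{2λ-1})`. -/
theorem main_lemma_p_two (lam γ t : ℝ) (hlam : lam ∈ Set.Ioo (1 / 2 : ℝ) 1)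
    (hγ : 0 < γ) (ht : 0 < t) :
    γ / Real.Gamma (2 * lam - 1) *
        ∫ s in (0 : ℝ)..t,
          (t - s) ^ (2 * lam - 2) * mittagLeffler (2 * lam - 1) (γ * s ^ (2 * lam - 1))
      ≤ mittagLeffler (2 * lam - 1) (γ * t ^ (2 * lam - 1)) :=
  main_lemma_p_two_general lam γ t hlam ht
end

section
/- Summability of the Mittag-Leffler series: For every α > 0 and every x ∈ ℝ, the series n ↦ x^n / Γ(nα + 1) is (absolutely) summable; in particular the Mittag-Leffler function E_α(x) = ∑_{n=0}^∞ x^n / Γ(nα + 1) is well defined for all real x. -/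
/-!
Pick `k` with `k * α ≥ 1` and split `ℕ` into the residue classes `n = k * m + r`. On each class
`n * α + 1 ≥ m + 1`, so monotonicity of `Γ` on `[2, ∞)` gives `Γ (n * α + 1) ≥ m !` for `m ≥ 1`,
and the class is dominated by `|x| ^ r * (|x| ^ k) ^ m / m !`, a multiple of the exponential series.
-/

open Nat Real

theorem summable_of_forall_summable_mul_add {R : Type*} [AddCommGroup R] [TopologicalSpace R]
    [IsTopologicalAddGroup R] (k : ℕ) [NeZero k] {f : ℕ → R}
    (h : ∀ r < k, Summable fun m ↦ f (k * m + r)) : Summable f := by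
  have hsum : Summable fun n ↦ ∑ a : ZMod k, {n : ℕ | (n : ZMod k) = a}.indicator f n := by
    refine summable_sum fun a _ ↦ ?_
    rw [← ZMod.natCast_zmod_val a, summable_indicator_mod_iff_summable]
    exact h _ (ZMod.val_lt a)
  rwa [← Finset.sum_fn, ← Finset.sum_indicator_mod] at hsum

theorem Real.factorial_le_Gamma {m : ℕ} {y : ℝ} (hm : 1 ≤ m) (hy : m + 1 ≤ y) :
    (m ! : ℝ) ≤ Gamma y := by
  have h2 : (2 : ℝ) ≤ m + 1 := by exact_mod_cast Nat.succ_le_succ hm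
  rw [← Gamma_nat_eq_factorial]
  exact Gamma_strictMonoOn_Ici.monotoneOn h2 (h2.trans hy) hy

theorem Real.factorial_le_Gamma_mul_add_one {α : ℝ} {k : ℕ} (hk : 1 ≤ k * α)
    {m : ℕ} (hm : 1 ≤ m) (r : ℕ) : (m ! : ℝ) ≤ Gamma (((k * m + r : ℕ) : ℝ) * α + 1) := by
  refine factorial_le_Gamma hm ?_
  have hα : 0 ≤ α := by
    by_contra! hα
    nlinarith [mul_nonpos_of_nonneg_of_nonpos k.cast_nonneg hα.le]
  have hr : 0 ≤ (r : ℝ) * α := by positivity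
  have hkm : (m : ℝ) ≤ m * (k * α) := le_mul_of_one_le_right m.cast_nonneg hk
  push_cast
  nlinarith

/-- Summability of the Mittag-Leffler series: for every `α > 0` and every `x : ℝ`, the
series `n ↦ x^n / Γ(nα + 1)` is summable. -/
theorem mittagLeffler_summable (α x : ℝ) (hα : 0 < α) :
    Summable fun n : ℕ => x ^ n / Real.Gamma ((n : ℝ) * α + 1) := by
  obtain ⟨j, hj⟩ := exists_nat_one_div_lt hα
  have hk : 1 ≤ ((j + 1 : ℕ) : ℝ) * α := by
    push_cast
    exact ((div_lt_iff₀' (by positivity)).1 hj).le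
  refine summable_of_forall_summable_mul_add (j + 1) fun r _ ↦ ?_
  refine .of_norm_bounded_eventually_nat
    ((summable_pow_div_factorial (|x| ^ (j + 1))).mul_left (|x| ^ r)) ?_
  filter_upwards [Filter.eventually_ge_atTop 1] with m hm
  have hΓ := factorial_le_Gamma_mul_add_one hk hm r
  rw [norm_div, norm_pow, norm_of_nonneg ((cast_pos.2 m.factorial_pos).trans_le hΓ).le,
    Real.norm_eq_abs, pow_add, pow_mul, mul_comm, ← mul_div_assoc]
  exact div_le_div_of_nonneg_left (by positivity) (cast_pos.2 m.factorial_pos) hΓ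
end

section
/- Two-delay exponential Gronwall bound (as used in the finite-time stability proof): Let h₁, h₂ > 0, h = max{h₁, h₂}, T ≥ h, and C ≥ 0. Let β : [0, T] → [0, ∞) be continuous and nondecreasing, ψ : [-h, 0] → [0, ∞) continuous, and u : [-h, T] → [0, ∞) continuous with u(t) = ψ(t) for t ∈ [-h, 0] and u(t) ≤ β(t) + C ∫_0^t ( u(s) + u(s - h₁) + u(s - h₂) ) ds for all t ∈ [0, T]. Then for every t ∈ [max{h₁, h₂}, T], u(t) ≤ [ β(t) + 2C ∫_{-h}^0 ψ(s) ds ] · exp( C (3t - h₁ - h₂) ). -/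
/-!
The weight `g s = exp (C (s + (s - h₁)⁺ + (s - h₂)⁺))` is a supersolution of the delayed
inequality: `1 + C (∫₀^σ g + ∫₀^{(σ-h₁)⁺} g + ∫₀^{(σ-h₂)⁺} g) ≤ g σ`. Comparing right derivatives
(which exist everywhere, kinks included), this reduces to `g (x - hᵢ) ≤ g x`, i.e. to `g` being
nondecreasing. After the shift `s ↦ s - hᵢ`, each delayed integral of `u` splits into the history
`∫_{-h}^0 ψ` and an undelayed integral over `[0, (σ - hᵢ)⁺]`. Hence, with
`B = β t + 2C ∫_{-h}^0 ψ`, every `B' > B` satisfies `u < B' g` on `[0, t]`, since `u` cannot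
cross `B' g` a first time. Letting `B' ↓ B` and using `g t = exp (C (3t - h₁ - h₂))` for
`t ≥ max h₁ h₂` gives the bound.
-/

open MeasureTheory Set intervalIntegral

theorem hasDerivWithinAt_Ici_max_sub_zero (h x : ℝ) :
    HasDerivWithinAt (fun y => max (y - h) 0) (if h ≤ x then 1 else 0) (Ici x) x := by
  split_ifs with hx
  · refine ((hasDerivAt_id x).sub_const h).hasDerivWithinAt.congr_of_mem (fun y hy => ?_)
      self_mem_Ici
    exact max_eq_left (by simp only [mem_Ici] at hy; linarith)
  · refine ((hasDerivAt_const x (0 : ℝ)).congr_of_eventuallyEq ?_).hasDerivWithinAt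
    filter_upwards [Iio_mem_nhds (not_le.1 hx)] with y hy
    exact max_eq_right (by simp only [mem_Iio] at hy; linarith)

theorem hasDerivWithinAt_Ici_integral_max_sub {g : ℝ → ℝ} (hg : Continuous g) (h x : ℝ) :
    HasDerivWithinAt (fun y => ∫ s in (0 : ℝ)..max (y - h) 0, g s)
      (g (max (x - h) 0) * if h ≤ x then 1 else 0) (Ici x) x :=
  (hg.integral_hasStrictDerivAt 0 _).hasDerivAt.comp_hasDerivWithinAt x
    (hasDerivWithinAt_Ici_max_sub_zero h x)

noncomputable def delayWeight (h₁ h₂ C s : ℝ) : ℝ :=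
  Real.exp (C * (s + max (s - h₁) 0 + max (s - h₂) 0))

namespace delayWeight

variable {h₁ h₂ C : ℝ}

theorem continuous : Continuous (delayWeight h₁ h₂ C) := by
  unfold delayWeight; fun_prop

theorem pos (s : ℝ) : 0 < delayWeight h₁ h₂ C s := Real.exp_pos _

theorem monotone (hC : 0 ≤ C) : Monotone (delayWeight h₁ h₂ C) := by
  intro a b hab
  unfold delayWeight
  gcongr

theorem zero (hh₁ : 0 ≤ h₁) (hh₂ : 0 ≤ h₂) : delayWeight h₁ h₂ C 0 = 1 := by
  simp [delayWeight, hh₁, hh₂]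

theorem of_le {t : ℝ} (ht₁ : h₁ ≤ t) (ht₂ : h₂ ≤ t) :
    delayWeight h₁ h₂ C t = Real.exp (C * (3 * t - h₁ - h₂)) := by
  rw [delayWeight, max_eq_left (by linarith), max_eq_left (by linarith)]
  ring_nf

theorem hasDerivWithinAt_Ici (x : ℝ) :
    HasDerivWithinAt (delayWeight h₁ h₂ C)
      (delayWeight h₁ h₂ C x *
        (C * (1 + (if h₁ ≤ x then 1 else 0) + (if h₂ ≤ x then 1 else 0)))) (Ici x) x :=
  ((((hasDerivWithinAt_id x _).add (hasDerivWithinAt_Ici_max_sub_zero h₁ x)).add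
    (hasDerivWithinAt_Ici_max_sub_zero h₂ x)).const_mul C).exp

theorem mul_integral_le_sub_one {σ : ℝ} (hh₁ : 0 ≤ h₁) (hh₂ : 0 ≤ h₂) (hC : 0 ≤ C)
    (hσ : 0 ≤ σ) :
    C * ((∫ s in (0 : ℝ)..σ, delayWeight h₁ h₂ C s)
      + (∫ s in (0 : ℝ)..max (σ - h₁) 0, delayWeight h₁ h₂ C s)
      + ∫ s in (0 : ℝ)..max (σ - h₂) 0, delayWeight h₁ h₂ C s)
      ≤ delayWeight h₁ h₂ C σ - 1 := by
  set g := delayWeight h₁ h₂ C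
  have hg : Continuous g := continuous
  refine image_le_of_deriv_right_le_deriv_boundary (a := 0) (b := σ) ?_
    (fun x _ => (((hg.integral_hasStrictDerivAt 0 x).hasDerivAt.hasDerivWithinAt.add
      (hasDerivWithinAt_Ici_integral_max_sub hg h₁ x)).add
      (hasDerivWithinAt_Ici_integral_max_sub hg h₂ x)).const_mul C)
    ?_ (hg.sub continuous_const).continuousOn
    (fun x _ => (hasDerivWithinAt_Ici x).sub_const 1) ?_ ⟨hσ, le_rfl⟩
  · fun_prop
  · simp [g, zero hh₁ hh₂, hh₁, hh₂]
  · intro x hx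
    have hdelay : ∀ h, 0 ≤ h → g (max (x - h) 0) * (if h ≤ x then 1 else 0)
        ≤ g x * if h ≤ x then 1 else 0 := fun h hh =>
      mul_le_mul_of_nonneg_right (monotone hC (max_le (by linarith) hx.1))
        (by split_ifs <;> norm_num)
    calc _ ≤ C * (g x + g x * (if h₁ ≤ x then 1 else 0) + g x * if h₂ ≤ x then 1 else 0) := by
          gcongr C * (_ + ?_ + ?_)
          exacts [hdelay h₁ hh₁, hdelay h₂ hh₂]
      _ = _ := by ring

end delayWeight

theorem integral_comp_sub_le_add {u : ℝ → ℝ} {h d σ : ℝ} (hd : 0 ≤ d) (hdh : d ≤ h) (hσ : 0 ≤ σ)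
    (hu_cont : ContinuousOn u (Icc (-h) σ)) (hu_nonneg : ∀ s ∈ Icc (-h) σ, 0 ≤ u s) :
    ∫ s in (0 : ℝ)..σ, u (s - d) ≤ (∫ s in -h..0, u s) + ∫ s in (0 : ℝ)..max (σ - d) 0, u s := by
  have hm₀ : 0 ≤ max (σ - d) 0 := le_max_right _ _
  have hmσ : max (σ - d) 0 ≤ σ := max_le (by linarith) hσ
  have hint : ∀ a b, -h ≤ a → a ≤ b → b ≤ σ → IntervalIntegrable u volume a b :=
    fun a b ha hab hb => (hu_cont.mono (Icc_subset_Icc ha hb)).intervalIntegrable_of_Icc hab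
  rw [integral_comp_sub_right, zero_sub, integral_add_adjacent_intervals
    (hint _ _ (by linarith) (by linarith) (by linarith)) (hint _ _ (by linarith) hm₀ hmσ)]
  refine integral_mono_interval (by linarith) (by linarith) (le_max_left _ _) ?_
    (hint _ _ le_rfl (by linarith) hmσ)
  exact ae_restrict_of_forall_mem measurableSet_Ioc fun s hs =>
    hu_nonneg s ⟨hs.1.le, hs.2.trans hmσ⟩

theorem forall_lt_of_forall_Ico_le_imp_lt {f g : ℝ → ℝ} {a b : ℝ}
    (hf : ContinuousOn f (Icc a b)) (hg : ContinuousOn g (Icc a b))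
    (step : ∀ x ∈ Icc a b, (∀ y ∈ Ico a x, f y ≤ g y) → f x < g x) :
    ∀ x ∈ Icc a b, f x < g x := by
  by_contra! hbad
  have hclosed : IsClosed {x ∈ Icc a b | g x ≤ f x} := isClosed_Icc.isClosed_le hg hf
  obtain ⟨x, ⟨hx, hgf⟩, hleast⟩ := (isCompact_Icc.of_isClosed_subset hclosed
    (sep_subset _ _)).exists_isLeast hbad
  refine hgf.not_gt (step x hx fun y hy => ?_)
  by_contra! hfg
  exact hy.2.not_ge (hleast ⟨⟨hy.1, hy.2.le.trans hx.2⟩, hfg.le⟩)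

theorem integral_add_delays_le {u : ℝ → ℝ} {h₁ h₂ σ : ℝ} (hh₁ : 0 ≤ h₁) (hh₂ : 0 ≤ h₂)
    (hσ : 0 ≤ σ) (hu_cont : ContinuousOn u (Icc (-max h₁ h₂) σ))
    (hu_nonneg : ∀ s ∈ Icc (-max h₁ h₂) σ, 0 ≤ u s) :
    ∫ s in (0 : ℝ)..σ, u s + u (s - h₁) + u (s - h₂)
      ≤ 2 * (∫ s in -max h₁ h₂..0, u s) + ((∫ s in (0 : ℝ)..σ, u s)
        + (∫ s in (0 : ℝ)..max (σ - h₁) 0, u s) + ∫ s in (0 : ℝ)..max (σ - h₂) 0, u s) := by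
  have hint : ∀ d, 0 ≤ d → d ≤ max h₁ h₂ →
      IntervalIntegrable (fun s => u (s - d)) volume 0 σ := fun d hd hdh =>
    (hu_cont.comp (f := fun s => s - d) (by fun_prop) fun s hs =>
      ⟨by linarith [hs.1], by linarith [hs.2]⟩).intervalIntegrable_of_Icc hσ
  have hint₀ : IntervalIntegrable u volume 0 σ := by simpa using hint 0 le_rfl (by positivity)
  rw [integral_add (hint₀.add (hint h₁ hh₁ (le_max_left _ _))) (hint h₂ hh₂ (le_max_right _ _)),
    integral_add hint₀ (hint h₁ hh₁ (le_max_left _ _))]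
  have := integral_comp_sub_le_add hh₁ (le_max_left _ h₂) hσ hu_cont hu_nonneg
  have := integral_comp_sub_le_add hh₂ (le_max_right h₁ _) hσ hu_cont hu_nonneg
  linarith

section Comparison

variable {u : ℝ → ℝ} {h₁ h₂ C b t : ℝ}

theorem lt_mul_delayWeight_of_forall_Ico (hh₁ : 0 ≤ h₁) (hh₂ : 0 ≤ h₂) (hC : 0 ≤ C)
    (hu_cont : ContinuousOn u (Icc (-max h₁ h₂) t))
    (hu_nonneg : ∀ s ∈ Icc (-max h₁ h₂) t, 0 ≤ u s)
    (hu_ineq : ∀ σ ∈ Icc 0 t, u σ ≤ b + C * ∫ s in (0 : ℝ)..σ, u s + u (s - h₁) + u (s - h₂))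
    {B : ℝ} (hB : b + 2 * C * (∫ s in -max h₁ h₂..0, u s) < B) (hB₀ : 0 ≤ B)
    {σ : ℝ} (hσ : σ ∈ Icc 0 t) (hbelow : ∀ r ∈ Ico 0 σ, u r ≤ B * delayWeight h₁ h₂ C r) :
    u σ < B * delayWeight h₁ h₂ C σ := by
  set g := delayWeight h₁ h₂ C
  have hσt : Icc (-max h₁ h₂) σ ⊆ Icc (-max h₁ h₂) t := Icc_subset_Icc_right hσ.2
  have hcomp : ∀ a ∈ Icc 0 σ, ∫ s in (0 : ℝ)..a, u s ≤ B * ∫ s in (0 : ℝ)..a, g s := by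
    intro a ha
    rw [← intervalIntegral.integral_const_mul]
    refine integral_mono_on_of_le_Ioo ha.1
      ((hu_cont.mono (Icc_subset_Icc (by linarith [le_max_left h₁ h₂])
        (ha.2.trans hσ.2))).intervalIntegrable_of_Icc ha.1)
      ((continuous_const.mul delayWeight.continuous).intervalIntegrable _ _)
      fun r hr => hbelow r ⟨hr.1.le, hr.2.trans_le ha.2⟩
  have hmax : ∀ h, 0 ≤ h → max (σ - h) 0 ∈ Icc 0 σ := fun h hh =>
    ⟨le_max_right _ _, max_le (by linarith) hσ.1⟩
  calc u σ ≤ b + C * ∫ s in (0 : ℝ)..σ, u s + u (s - h₁) + u (s - h₂) := hu_ineq σ hσ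
    _ ≤ b + C * (2 * (∫ s in -max h₁ h₂..0, u s) + (B * (∫ s in (0 : ℝ)..σ, g s)
        + B * (∫ s in (0 : ℝ)..max (σ - h₁) 0, g s)
        + B * ∫ s in (0 : ℝ)..max (σ - h₂) 0, g s)) := by
      grw [integral_add_delays_le hh₁ hh₂ hσ.1 (hu_cont.mono hσt)
        fun s hs => hu_nonneg s (hσt hs), hcomp σ ⟨hσ.1, le_rfl⟩, hcomp _ (hmax h₁ hh₁),
        hcomp _ (hmax h₂ hh₂)]
    _ = b + 2 * C * (∫ s in -max h₁ h₂..0, u s) + B * (C * ((∫ s in (0 : ℝ)..σ, g s)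
        + (∫ s in (0 : ℝ)..max (σ - h₁) 0, g s) + ∫ s in (0 : ℝ)..max (σ - h₂) 0, g s)) := by ring
    _ ≤ b + 2 * C * (∫ s in -max h₁ h₂..0, u s) + B * (g σ - 1) := by
      grw [delayWeight.mul_integral_le_sub_one hh₁ hh₂ hC hσ.1]
    _ < B * g σ := by linarith

theorem le_mul_delayWeight (hh₁ : 0 ≤ h₁) (hh₂ : 0 ≤ h₂) (hC : 0 ≤ C)
    (hu_cont : ContinuousOn u (Icc (-max h₁ h₂) t))
    (hu_nonneg : ∀ s ∈ Icc (-max h₁ h₂) t, 0 ≤ u s)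
    (hu_ineq : ∀ σ ∈ Icc 0 t, u σ ≤ b + C * ∫ s in (0 : ℝ)..σ, u s + u (s - h₁) + u (s - h₂))
    {σ : ℝ} (hσ : σ ∈ Icc 0 t) :
    u σ ≤ (b + 2 * C * ∫ s in -max h₁ h₂..0, u s) * delayWeight h₁ h₂ C σ := by
  have hb : 0 ≤ b := by
    have h0 := hu_ineq 0 ⟨le_rfl, hσ.1.trans hσ.2⟩
    rw [integral_same, mul_zero, add_zero] at h0
    linarith [hu_nonneg 0 ⟨by linarith [le_max_left h₁ h₂], hσ.1.trans hσ.2⟩]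
  have hhist : 0 ≤ ∫ s in -max h₁ h₂..0, u s :=
    integral_nonneg (by linarith [le_max_left h₁ h₂])
      fun s hs => hu_nonneg s ⟨hs.1, hs.2.trans (hσ.1.trans hσ.2)⟩
  have hB₀ : 0 ≤ b + 2 * C * ∫ s in -max h₁ h₂..0, u s := by
    have := mul_nonneg hC hhist
    linarith
  have hlt : ∀ B, b + 2 * C * (∫ s in -max h₁ h₂..0, u s) < B →
      u σ < B * delayWeight h₁ h₂ C σ := fun B hB =>
    forall_lt_of_forall_Ico_le_imp_lt
      (hu_cont.mono (Icc_subset_Icc_left (by linarith [le_max_left h₁ h₂])))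
      (continuous_const.mul delayWeight.continuous).continuousOn
      (fun r hr => lt_mul_delayWeight_of_forall_Ico hh₁ hh₂ hC hu_cont hu_nonneg hu_ineq hB
        (hB₀.trans hB.le) hr) σ hσ
  rw [← div_le_iff₀ (delayWeight.pos σ)]
  exact le_of_forall_gt_imp_ge_of_dense fun B hB =>
    (div_le_iff₀ (delayWeight.pos σ)).2 (hlt B hB).le

end Comparison

theorem two_delay_gronwall_general (h₁ h₂ T C : ℝ) (hh₁ : 0 < h₁) (hh₂ : 0 < h₂)
    (hC : 0 ≤ C) (β ψ u : ℝ → ℝ)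
    (hβ_mono : MonotoneOn β (Set.Icc 0 T))
    (hu_cont : ContinuousOn u (Set.Icc (-(max h₁ h₂)) T))
    (hu_nonneg : ∀ t ∈ Set.Icc (-(max h₁ h₂)) T, 0 ≤ u t)
    (hu_init : ∀ t ∈ Set.Icc (-(max h₁ h₂)) (0 : ℝ), u t = ψ t)
    (hu_ineq : ∀ t ∈ Set.Icc (0 : ℝ) T,
      u t ≤ β t + C * ∫ s in (0 : ℝ)..t, u s + u (s - h₁) + u (s - h₂)) :
    ∀ t ∈ Set.Icc (max h₁ h₂) T,
      u t ≤ (β t + 2 * C * ∫ s in (-(max h₁ h₂))..(0 : ℝ), ψ s) *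
        Real.exp (C * (3 * t - h₁ - h₂)) := by
  intro t ⟨hht, htT⟩
  have ht₀ : 0 ≤ t := (hh₁.le.trans (le_max_left h₁ h₂)).trans hht
  have hhist : ∫ s in -max h₁ h₂..0, u s = ∫ s in -max h₁ h₂..0, ψ s :=
    integral_congr fun s hs =>
      hu_init s (by rwa [uIcc_of_le (by linarith [le_max_left h₁ h₂])] at hs)
  have hbound := le_mul_delayWeight (b := β t) hh₁.le hh₂.le hC
    (hu_cont.mono (Icc_subset_Icc_right htT)) (fun s hs => hu_nonneg s ⟨hs.1, hs.2.trans htT⟩)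
    (fun σ hσ => (hu_ineq σ ⟨hσ.1, hσ.2.trans htT⟩).trans (by
      gcongr
      exact hβ_mono ⟨hσ.1, hσ.2.trans htT⟩ ⟨ht₀, htT⟩ hσ.2)) ⟨ht₀, le_rfl⟩
  rwa [hhist, delayWeight.of_le ((le_max_left _ _).trans hht) ((le_max_right _ _).trans hht)]
    at hbound

/-- Two-delay exponential Gronwall bound (as used in the finite-time stability proof). -/
theorem two_delay_gronwall (h₁ h₂ T C : ℝ) (hh₁ : 0 < h₁) (hh₂ : 0 < h₂)
    (hT : max h₁ h₂ ≤ T) (hC : 0 ≤ C) (β ψ u : ℝ → ℝ)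
    (hβ_cont : ContinuousOn β (Set.Icc 0 T)) (hβ_mono : MonotoneOn β (Set.Icc 0 T))
    (hβ_nonneg : ∀ t ∈ Set.Icc (0 : ℝ) T, 0 ≤ β t)
    (hψ_cont : ContinuousOn ψ (Set.Icc (-(max h₁ h₂)) 0))
    (hψ_nonneg : ∀ t ∈ Set.Icc (-(max h₁ h₂)) (0 : ℝ), 0 ≤ ψ t)
    (hu_cont : ContinuousOn u (Set.Icc (-(max h₁ h₂)) T))
    (hu_nonneg : ∀ t ∈ Set.Icc (-(max h₁ h₂)) T, 0 ≤ u t)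
    (hu_init : ∀ t ∈ Set.Icc (-(max h₁ h₂)) (0 : ℝ), u t = ψ t)
    (hu_ineq : ∀ t ∈ Set.Icc (0 : ℝ) T,
      u t ≤ β t + C * ∫ s in (0 : ℝ)..t, u s + u (s - h₁) + u (s - h₂)) :
    ∀ t ∈ Set.Icc (max h₁ h₂) T,
      u t ≤ (β t + 2 * C * ∫ s in (-(max h₁ h₂))..(0 : ℝ), ψ s) *
        Real.exp (C * (3 * t - h₁ - h₂)) :=
  two_delay_gronwall_general h₁ h₂ T C hh₁ hh₂ hC β ψ u hβ_mono hu_cont hu_nonneg hu_init hu_ineq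
end
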